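/- arXiv:math/0509211 — 2 statements merged into one kernel-verified Lean document; each statement's English description precedes it below -/
import Mathlib

section
/- Define F_n ∈ ℝ[x] by F_0 = 1, F_1 = x, F_n = 2(2−x)F_{n−1} − F_{n−2}. For each k ≥ 3, the equation F_k(x) = 1 has a unique solution x_k in the open interval (0,1). -/
open Polynomial

noncomputable def F : ℕ → Polynomial ℝ
  | 0 => 1
  | 1 => X
  | (n + 2) => 2 * (2 - X) * F (n + 1) - F n

/-!
Substitute `x = 2 - cosh (2 s)`; as `s` runs over `(0, arcosh 2 / 2)`, `x` runs over `(0, 1)`.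
The recurrence then has the solution
`F n (x) * sinh (2 s) = cosh (2 n s) * sinh (2 s) - 2 (cosh (2 s) - 1) * sinh (2 n s)`,
and `F k (x) = 1` becomes `sinh ((k + 1) s) = 3 sinh ((k - 1) s)`. The ratio
`sinh ((k + 1) s) / sinh ((k - 1) s)` is strictly increasing in `s > 0`; it is below `3` at
`s = arcosh 2 / (2 (k - 1))` because `k + 1 ≤ 2 (k - 1)`, and above `3` at `s = arcosh 2 / 2`.
-/

open Real Set

lemma F_eval_two_sub_cosh_mul_sinh (n : ℕ) (s : ℝ) :
    (F n).eval (2 - cosh (2 * s)) * sinh (2 * s)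
      = cosh (2 * n * s) * sinh (2 * s) - 2 * (cosh (2 * s) - 1) * sinh (2 * n * s) := by
  induction n using Nat.twoStepInduction with
  | zero => simp [F]
  | one => simp [F]; ring
  | more n ih₀ ih₁ =>
    have hsucc : 2 * ((n + 1 + 1 : ℕ) : ℝ) * s = 2 * ((n + 1 : ℕ) : ℝ) * s + 2 * s := by
      push_cast; ring
    have hpred : 2 * (n : ℝ) * s = 2 * ((n + 1 : ℕ) : ℝ) * s - 2 * s := by push_cast; ring
    rw [hpred, cosh_sub, sinh_sub] at ih₀
    rw [hsucc, cosh_add, sinh_add, F, eval_sub, eval_mul, eval_mul]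
    simp only [eval_sub, eval_ofNat, eval_X]
    linear_combination 2 * cosh (2 * s) * ih₁ - ih₀

lemma F_eval_two_sub_cosh_sub_one_mul_sinh (n : ℕ) (s : ℝ) :
    ((F n).eval (2 - cosh (2 * s)) - 1) * sinh (2 * s)
      = 2 * sinh (n * s) * sinh s * (3 * sinh ((n - 1) * s) - sinh ((n + 1) * s)) := by
  rw [sub_one_mul, F_eval_two_sub_cosh_mul_sinh, show 2 * (n : ℝ) * s = n * s + n * s by ring,
    show 2 * s = s + s by ring, show (n - 1) * s = n * s - s by ring,
    show (n + 1) * s = n * s + s by ring, cosh_add, sinh_add, cosh_add, sinh_add, sinh_add,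
    sinh_sub]
  linear_combination (-4 * sinh (n * s) * cosh (n * s)) * cosh_sq s
    + 2 * sinh s * cosh s * cosh_sq (n * s)

lemma F_eval_two_sub_cosh_eq_one_iff {n : ℕ} (hn : n ≠ 0) {s : ℝ} (hs : 0 < s) :
    (F n).eval (2 - cosh (2 * s)) = 1 ↔ sinh ((n + 1) * s) = 3 * sinh ((n - 1) * s) := by
  have h2s : sinh (2 * s) ≠ 0 := (sinh_pos_iff.2 (by positivity)).ne'
  have hns : 2 * sinh (n * s) * sinh s ≠ 0 :=
    (mul_pos (mul_pos two_pos (sinh_pos_iff.2 (by positivity))) (sinh_pos_iff.2 hs)).ne'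
  rw [← sub_eq_zero, ← mul_left_inj' h2s, zero_mul, F_eval_two_sub_cosh_sub_one_mul_sinh,
    mul_eq_zero, or_iff_right hns, sub_eq_zero, eq_comm]

lemma sinh_add_sinh_lt_sinh_add {a b : ℝ} (ha : 0 < a) (hb : 0 < b) :
    sinh a + sinh b < sinh (a + b) := by
  rw [sinh_add]
  nlinarith [sinh_pos_iff.2 ha, sinh_pos_iff.2 hb, one_lt_cosh.2 ha.ne', one_lt_cosh.2 hb.ne']

lemma nat_mul_sinh_lt_sinh_nat_mul {n : ℕ} (hn : 2 ≤ n) {u : ℝ} (hu : 0 < u) :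
    n * sinh u < sinh (n * u) := by
  induction n, hn using Nat.le_induction with
  | base => simpa [two_mul] using sinh_add_sinh_lt_sinh_add hu hu
  | succ n hn ih =>
    calc ((n + 1 : ℕ) : ℝ) * sinh u = n * sinh u + sinh u := by push_cast; ring
      _ < sinh (n * u) + sinh u := by gcongr
      _ < sinh (n * u + u) := sinh_add_sinh_lt_sinh_add (by positivity) hu
      _ = sinh ((n + 1 : ℕ) * u) := by push_cast; ring_nf

lemma strictMonoOn_sinh_div_sinh {n : ℕ} (hn : 2 ≤ n) :
    StrictMonoOn (fun s ↦ sinh ((n + 1) * s) / sinh ((n - 1) * s)) (Ioi 0) := by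
  have hn1 : (1 : ℝ) < n := by exact_mod_cast hn
  have hden : ∀ s ∈ Ioi (0 : ℝ), 0 < sinh ((n - 1) * s) := fun s hs ↦
    sinh_pos_iff.2 (mul_pos (by linarith) hs)
  have hderiv (a s : ℝ) : HasDerivAt (fun s ↦ sinh (a * s)) (cosh (a * s) * a) s :=
    (hasDerivAt_sinh (a * s)).comp s (by simpa using (hasDerivAt_id s).const_mul a)
  apply strictMonoOn_of_deriv_pos (convex_Ioi 0)
  · exact (by fun_prop : Continuous fun s ↦ sinh ((n + 1) * s)).continuousOn.div
      (by fun_prop) fun s hs ↦ (hden s hs).ne'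
  · intro s hs
    rw [interior_Ioi] at hs
    rw [((hderiv (n + 1) s).fun_div (hderiv (n - 1) s) (hden s hs).ne').deriv]
    refine div_pos ?_ (pow_pos (hden s hs) 2)
    -- the numerator is `sinh (n * 2 s) - n * sinh (2 s)`
    have hsplit : (n : ℝ) * (2 * s) = (n + 1) * s + (n - 1) * s := by ring
    have hdiff : 2 * s = (n + 1) * s - (n - 1) * s := by ring
    have := nat_mul_sinh_lt_sinh_nat_mul hn (mul_pos two_pos hs)
    rw [hsplit, hdiff, sinh_add, sinh_sub] at this
    linear_combination this

lemma eq_of_sinh_eq_three_mul_sinh {n : ℕ} (hn : 2 ≤ n) {s t : ℝ} (hs : 0 < s) (ht : 0 < t)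
    (hs' : sinh ((n + 1) * s) = 3 * sinh ((n - 1) * s))
    (ht' : sinh ((n + 1) * t) = 3 * sinh ((n - 1) * t)) : s = t := by
  have hn1 : (1 : ℝ) < n := by exact_mod_cast hn
  have hpos {u : ℝ} (hu : 0 < u) : sinh ((n - 1) * u) ≠ 0 :=
    (sinh_pos_iff.2 (mul_pos (by linarith) hu)).ne'
  refine (strictMonoOn_sinh_div_sinh hn).injOn hs ht ?_
  simp only [hs', ht', mul_div_cancel_right₀ _ (hpos hs), mul_div_cancel_right₀ _ (hpos ht)]

lemma exists_sinh_eq_three_mul_sinh {n : ℕ} (hn : 3 ≤ n) :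
    ∃ s ∈ Ioo 0 (arcosh 2 / 2), sinh ((n + 1) * s) = 3 * sinh ((n - 1) * s) := by
  set c := arcosh 2 / 2 with hc_def
  have hn3 : (3 : ℝ) ≤ n := by exact_mod_cast hn
  have hc : 0 < c := half_pos (arcosh_pos (by norm_num))
  have hcosh : cosh (2 * c) = 2 := by
    rw [hc_def, mul_div_cancel₀ _ two_ne_zero, cosh_arcosh (by norm_num)]
  set s₀ := c / (n - 1)
  have hs₀ : 0 < s₀ := div_pos hc (by linarith)
  have hs₀c : (n - 1) * s₀ = c := mul_div_cancel₀ _ (by linarith)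
  have hs₀_lt : s₀ < c := by nlinarith
  have hlow : sinh ((n + 1) * s₀) - 3 * sinh ((n - 1) * s₀) < 0 := by
    -- `cosh c ^ 2 = (cosh (2 c) + 1) / 2 = 3 / 2`
    have hcosh_c : cosh c < 3 / 2 := by
      nlinarith [cosh_two_mul c, cosh_sq c, cosh_pos c]
    have hsinh_c : 0 < sinh c := sinh_pos_iff.2 hc
    have := calc
      sinh ((n + 1) * s₀) ≤ sinh (2 * c) := sinh_le_sinh.2 (by nlinarith)
      _ = 2 * sinh c * cosh c := sinh_two_mul c
      _ < 3 * sinh c := by nlinarith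
    rwa [hs₀c, sub_neg]
  have hhigh : 0 < sinh ((n + 1) * c) - 3 * sinh ((n - 1) * c) := by
    have hsinh_2c : 1 < sinh (2 * c) := by
      nlinarith [cosh_sq (2 * c), sinh_pos_iff.2 (mul_pos two_pos hc)]
    rw [show (n + 1) * c = (n - 1) * c + 2 * c by ring, sinh_add, hcosh]
    nlinarith [sinh_lt_cosh ((n - 1) * c),
      sinh_pos_iff.2 (mul_pos (by linarith : (0 : ℝ) < n - 1) hc)]
  obtain ⟨s, hs, hroot⟩ := intermediate_value_Ioo hs₀_lt.le
    (by fun_prop : Continuous fun s ↦ sinh ((n + 1) * s) - 3 * sinh ((n - 1) * s)).continuousOn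
    ⟨hlow, hhigh⟩
  exact ⟨s, ⟨hs₀.trans hs.1, hs.2⟩, sub_eq_zero.1 hroot⟩

lemma two_sub_cosh_two_mul_mem_Ioo {s : ℝ} (hs : s ∈ Ioo 0 (arcosh 2 / 2)) :
    2 - cosh (2 * s) ∈ Ioo 0 1 := by
  have hgt : 1 < cosh (2 * s) := one_lt_cosh.2 (by linarith [hs.1])
  have hlt : cosh (2 * s) < 2 := by
    calc cosh (2 * s) < cosh (arcosh 2) :=
          cosh_strictMonoOn (by simp [hs.1.le]) (arcosh_nonneg (by norm_num)) (by linarith [hs.2])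
      _ = 2 := cosh_arcosh (by norm_num)
  constructor <;> linarith

lemma exists_pos_two_sub_cosh_two_mul_eq {y : ℝ} (hy : y < 1) :
    ∃ s, 0 < s ∧ 2 - cosh (2 * s) = y :=
  ⟨arcosh (2 - y) / 2, half_pos (arcosh_pos (by linarith)), by
    rw [mul_div_cancel₀ _ two_ne_zero, cosh_arcosh (by linarith)]; ring⟩

theorem F_k_eq_one_unique_root (k : ℕ) (hk : 3 ≤ k) :
    ∃! x : ℝ, x ∈ Set.Ioo (0 : ℝ) 1 ∧ (F k).eval x = 1 := by
  have hk0 : k ≠ 0 := by omega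
  obtain ⟨s, hs, hroot⟩ := exists_sinh_eq_three_mul_sinh hk
  refine ⟨2 - cosh (2 * s),
    ⟨two_sub_cosh_two_mul_mem_Ioo hs, (F_eval_two_sub_cosh_eq_one_iff hk0 hs.1).2 hroot⟩, ?_⟩
  rintro y ⟨hy, hFy⟩
  obtain ⟨t, ht, rfl⟩ := exists_pos_two_sub_cosh_two_mul_eq hy.2
  rw [eq_of_sinh_eq_three_mul_sinh (by omega) ht hs.1
    ((F_eval_two_sub_cosh_eq_one_iff hk0 ht).1 hFy) hroot]
end

section
/- Let k₁, k₂ be positive integers and 0 < p < 1. Then the quantity γ = 2p(1−p)(k₁k₂ − 1)/((1−p)k₁ + p k₂ + k₁k₂) is nonnegative, and is zero iff k₁k₂ = 1. Moreover the 2×2 stochastic matrix P with rows [p(k₁−1)/k₁, p/k₁ + 1−p] and [(1−p)/k₂ + p, (1−p)(k₂−1)/k₂] has stationary distribution π, and γ = E_π of the expected length increment, computed explicitly. -/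
/-! A two-state chain with off-diagonal entries `s = P 0 1`, `t = P 1 0` has stationary
law `(t, s) / (s + t)`. With `s = p/k₁ + (1-p)`, `t = (1-p)/k₂ + p` and the one-step length
increments `(1-p) - p/k₁`, `p - (1-p)/k₂`, the averaged increment clears to
`2p(1-p)(k₁k₂ - 1) / ((1-p)k₁ + pk₂ + k₁k₂)`, whose sign is that of `k₁k₂ - 1`. -/

namespace Matrix

theorem vecMul_eq_self_of_fin_two {K : Type*} [Field K] {P : Matrix (Fin 2) (Fin 2) K}
    (hrow : ∀ i, ∑ j, P i j = 1) (hS : P 1 0 + P 0 1 ≠ 0) :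
    vecMul ![P 1 0 / (P 1 0 + P 0 1), P 0 1 / (P 1 0 + P 0 1)] P =
      ![P 1 0 / (P 1 0 + P 0 1), P 0 1 / (P 1 0 + P 0 1)] := by
  have h0 : P 0 0 = 1 - P 0 1 := by
    have := hrow 0; rw [Fin.sum_univ_two] at this; linear_combination this
  have h1 : P 1 1 = 1 - P 1 0 := by
    have := hrow 1; rw [Fin.sum_univ_two] at this; linear_combination this
  ext i
  fin_cases i <;> simp [vecMul, dotProduct, Fin.sum_univ_two, h0, h1] <;> field_simp <;> ring

end Matrix

section FreeProductDrift

variable {a b p : ℝ}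

/-- The chain of the last letter's factor on `G₁ ★ G₂` with `|Σ₁| = a`, `|Σ₂| = b`, `μ(Σ₁) = p`. -/
noncomputable def freeProductFactorMatrix (p a b : ℝ) : Matrix (Fin 2) (Fin 2) ℝ :=
  !![p * (a - 1) / a, p / a + (1 - p); (1 - p) / b + p, (1 - p) * (b - 1) / b]

theorem freeProductFactorMatrix_row_sum (ha : a ≠ 0) (hb : b ≠ 0) (i : Fin 2) :
    ∑ j, freeProductFactorMatrix p a b i j = 1 := by
  fin_cases i <;> simp [freeProductFactorMatrix, Fin.sum_univ_two] <;> field_simp <;> ring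

theorem freeProduct_drift_denom_pos (ha : 0 < a) (hb : 0 < b) (hp0 : 0 ≤ p) (hp1 : p ≤ 1) :
    0 < (1 - p) * a + p * b + a * b := by
  have := mul_pos ha hb
  have := mul_nonneg (sub_nonneg.2 hp1) ha.le
  have := mul_nonneg hp0 hb.le
  linarith

theorem freeProduct_drift_nonneg (ha : 1 ≤ a) (hb : 1 ≤ b) (hp0 : 0 ≤ p) (hp1 : p ≤ 1) :
    0 ≤ 2 * p * (1 - p) * (a * b - 1) / ((1 - p) * a + p * b + a * b) := by
  have hD := freeProduct_drift_denom_pos (one_pos.trans_le ha) (one_pos.trans_le hb) hp0 hp1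
  have hab : 0 ≤ a * b - 1 := by nlinarith
  have : 0 ≤ 1 - p := by linarith
  positivity

theorem freeProduct_drift_eq_zero_iff (ha : 0 < a) (hb : 0 < b) (hp0 : 0 < p) (hp1 : p < 1) :
    2 * p * (1 - p) * (a * b - 1) / ((1 - p) * a + p * b + a * b) = 0 ↔ a * b = 1 := by
  have hD := freeProduct_drift_denom_pos ha hb hp0.le hp1.le
  have hq : 1 - p ≠ 0 := by linarith
  simp [div_eq_zero_iff, hD.ne', hp0.ne', hq, sub_eq_zero]

theorem freeProduct_stationary_mass_eq (ha : a ≠ 0) (hb : b ≠ 0) :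
    (1 - p) / b + p + (p / a + (1 - p)) = ((1 - p) * a + p * b + a * b) / (a * b) := by
  field_simp
  ring

theorem freeProduct_drift_eq_stationary_mean (ha : a ≠ 0) (hb : b ≠ 0)
    (hD : (1 - p) * a + p * b + a * b ≠ 0) :
    2 * p * (1 - p) * (a * b - 1) / ((1 - p) * a + p * b + a * b) =
      ((1 - p) / b + p) / ((1 - p) / b + p + (p / a + (1 - p))) * ((1 - p) - p / a) +
        (p / a + (1 - p)) / ((1 - p) / b + p + (p / a + (1 - p))) * (p - (1 - p) / b) := by
  rw [freeProduct_stationary_mass_eq ha hb]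
  field_simp
  ring

end FreeProductDrift

theorem elementary_drift_formula (k1 k2 : ℕ) (hk1 : 0 < k1) (hk2 : 0 < k2)
    (p : ℝ) (hp0 : 0 < p) (hp1 : p < 1)
    (γ : ℝ)
    (hγ : γ = 2 * p * (1 - p) * ((k1 : ℝ) * k2 - 1) /
      ((1 - p) * k1 + p * k2 + (k1 : ℝ) * k2))
    (P : Matrix (Fin 2) (Fin 2) ℝ)
    (hP : P = !![p * ((k1 : ℝ) - 1) / k1, p / k1 + (1 - p);
                 (1 - p) / k2 + p, (1 - p) * ((k2 : ℝ) - 1) / k2])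
    (π : Fin 2 → ℝ)
    (hπ : π = fun i =>
      if i = 0 then ((1 - p) / k2 + p) / (((1 - p) / k2 + p) + (p / k1 + (1 - p)))
      else (p / k1 + (1 - p)) / (((1 - p) / k2 + p) + (p / k1 + (1 - p)))) :
    (0 ≤ γ) ∧ (γ = 0 ↔ (k1 : ℝ) * k2 = 1) ∧
    (∀ i, ∑ j, P i j = 1) ∧
    Matrix.vecMul π P = π ∧
    γ = π 0 * ((1 - p) - p / k1) + π 1 * (p - (1 - p) / k2) := by
  have ha : (1 : ℝ) ≤ k1 := by exact_mod_cast hk1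
  have hb : (1 : ℝ) ≤ k2 := by exact_mod_cast hk2
  have ha0 : (k1 : ℝ) ≠ 0 := by positivity
  have hb0 : (k2 : ℝ) ≠ 0 := by positivity
  have hD := freeProduct_drift_denom_pos (one_pos.trans_le ha) (one_pos.trans_le hb) hp0.le hp1.le
  have hrow : ∀ i, ∑ j, P i j = 1 := hP ▸ freeProductFactorMatrix_row_sum ha0 hb0
  have hS : P 1 0 + P 0 1 ≠ 0 := by
    simpa [hP, freeProduct_stationary_mass_eq ha0 hb0, hk1.ne', hk2.ne'] using hD.ne'
  have hπ' : π = ![P 1 0 / (P 1 0 + P 0 1), P 0 1 / (P 1 0 + P 0 1)] := by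
    ext i; fin_cases i <;> simp [hπ, hP]
  subst hγ
  refine ⟨freeProduct_drift_nonneg ha hb hp0.le hp1.le,
    freeProduct_drift_eq_zero_iff (one_pos.trans_le ha) (one_pos.trans_le hb) hp0 hp1, hrow,
    hπ' ▸ Matrix.vecMul_eq_self_of_fin_two hrow hS, ?_⟩
  simpa [hπ', hP] using freeProduct_drift_eq_stationary_mean ha0 hb0 hD.ne'
end
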